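/- Let n > 1 and F_n = 2^(2^n) + 1. Define s_0 = 8, s_{k+1} = s_k² − 2 (so s_k = 2·T_{2^k}(4)). If F_n is prime then F_n divides s_{2^n − 2}. -/

import Mathlib

def fermatSeq : ℕ → ℤ
  | 0 => 8
  | k + 1 => fermatSeq k ^ 2 - 2

/-!
Let `p = Fₙ` be prime with `n ≥ 2`. Then `p ≡ 1 (mod 8)` and `p ≡ 2 (mod 15)`, so by quadratic
reciprocity `2` is a square mod `p` while `3` and `5` are not; hence `15` has a square root `s`
in `𝔽_p`. The numbers `ω = 4 + s` and `ω⁻¹ = 4 - s` satisfy `fermatSeq k = ω ^ 2 ^ k + ω⁻¹ ^ 2 ^ k`, and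
`6 ω = (3 + s) ^ 2` shows that `ω` is a nonresidue, so `ω ^ 2 ^ (2 ^ n - 1) = ω ^ ((p - 1) / 2) = -1`
by Euler's criterion. Thus `x = ω ^ 2 ^ (2 ^ n - 2)` satisfies `x ^ 2 = -1`, i.e. `x + x⁻¹ = 0`.
-/

theorem fermatSeq_cast_eq {R : Type*} [CommRing R] {w w' : R} (hsum : w + w' = 8)
    (hprod : w * w' = 1) (k : ℕ) : (fermatSeq k : R) = w ^ 2 ^ k + w' ^ 2 ^ k := by
  induction k with
  | zero => simpa [fermatSeq] using hsum.symm
  | succ k ih =>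
    have hprod_pow : w ^ 2 ^ k * w' ^ 2 ^ k = 1 := by rw [← mul_pow, hprod, one_pow]
    rw [fermatSeq]
    push_cast
    rw [ih, pow_succ 2 k, pow_mul, pow_mul]
    linear_combination 2 * hprod_pow

theorem fermatSeq_cast_eq_zero_of_pow_eq_neg_one {R : Type*} [CommRing R] {w w' : R}
    (hsum : w + w' = 8) (hprod : w * w' = 1) {k : ℕ} (hw : w ^ 2 ^ (k + 1) = -1) :
    (fermatSeq k : R) = 0 := by
  have hx : (w ^ 2 ^ k) ^ 2 = -1 := by rw [← pow_mul, ← pow_succ, hw]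
  have hxy : w ^ 2 ^ k * w' ^ 2 ^ k = 1 := by rw [← mul_pow, hprod, one_pow]
  rw [fermatSeq_cast_eq hsum hprod]
  linear_combination w' ^ 2 ^ k * hx - w ^ 2 ^ k * hxy

namespace Nat

theorem fermatNumber_add_two (m : ℕ) : fermatNumber (m + 2) = 16 ^ 2 ^ m + 1 := by
  rw [fermatNumber, pow_add, pow_mul']
  norm_num

theorem fermatNumber_modEq_two_mod_fifteen {n : ℕ} (hn : 2 ≤ n) :
    fermatNumber n ≡ 2 [MOD 15] := by
  obtain ⟨m, rfl⟩ := Nat.exists_eq_add_of_le' hn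
  rw [fermatNumber_add_two]
  simpa using ((show 16 ≡ 1 [MOD 15] from rfl).pow (2 ^ m)).add_right 1

theorem fermatNumber_modEq_one_mod_sixteen {n : ℕ} (hn : 2 ≤ n) :
    fermatNumber n ≡ 1 [MOD 16] := by
  obtain ⟨m, rfl⟩ := Nat.exists_eq_add_of_le' hn
  rw [fermatNumber_add_two]
  exact (modEq_zero_iff_dvd.mpr (dvd_pow_self 16 (pow_ne_zero m two_ne_zero))).add_right 1

theorem fermatNumber_div_two (n : ℕ) : fermatNumber n / 2 = 2 ^ (2 ^ n - 1) := by
  have h : 2 ^ 2 ^ n = 2 * 2 ^ (2 ^ n - 1) := by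
    rw [← _root_.pow_succ', Nat.sub_add_cancel Nat.one_le_two_pow]
  rw [fermatNumber, h]
  omega

end Nat

namespace ZMod

variable {p : ℕ} [Fact p.Prime]

theorem pow_div_two_eq_neg_one_of_not_isSquare {a : ZMod p} (ha : ¬IsSquare a) :
    a ^ (p / 2) = -1 := by
  have ha0 : a ≠ 0 := by
    rintro rfl
    exact ha IsSquare.zero
  exact (pow_div_two_eq_neg_one_or_one p ha0).resolve_left (mt (euler_criterion p ha0).mpr ha)

theorem isSquare_mul_of_not_isSquare {a b : ZMod p} (ha : ¬IsSquare a) (hb : ¬IsSquare b) :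
    IsSquare (a * b) := by
  have hab : a * b ≠ 0 := by
    rintro hab
    rcases mul_eq_zero.mp hab with rfl | rfl
    exacts [ha IsSquare.zero, hb IsSquare.zero]
  rw [euler_criterion p hab, mul_pow, pow_div_two_eq_neg_one_of_not_isSquare ha,
    pow_div_two_eq_neg_one_of_not_isSquare hb, neg_one_mul, neg_neg]

theorem not_isSquare_natCast_of_modEq_two {q : ℕ} [Fact q.Prime] (hp : p % 4 = 1)
    (hq : q % 8 = 3 ∨ q % 8 = 5) (hpq : p ≡ 2 [MOD q]) : ¬IsSquare (q : ZMod p) := by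
  have hq2 : q ≠ 2 := by omega
  rw [exists_sq_eq_prime_iff_of_mod_four_eq_one hp hq2, (natCast_eq_natCast_iff _ _ _).mpr hpq,
    Nat.cast_ofNat, exists_sq_eq_two_iff hq2]
  omega

theorem exists_sq_eq_fifteen_and_four_add_pow_div_two_eq_neg_one (h2 : IsSquare (2 : ZMod p))
    (h3 : ¬IsSquare (3 : ZMod p)) (h5 : ¬IsSquare (5 : ZMod p)) :
    ∃ s : ZMod p, s ^ 2 = 15 ∧ (4 + s) ^ (p / 2) = -1 := by
  obtain ⟨s, hs⟩ := isSquare_mul_of_not_isSquare h3 h5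
  have hs : s ^ 2 = 15 := by linear_combination -hs
  refine ⟨s, hs, ?_⟩
  have h2ne : (2 : ZMod p) ≠ 0 := fun h => h3 ⟨1, by linear_combination h⟩
  have h3ne : (3 : ZMod p) ≠ 0 := fun h => h3 (by rw [h]; exact IsSquare.zero)
  have hw0 : 4 + s ≠ 0 := by
    intro h
    have hinv : (4 + s) * (4 - s) = 1 := by linear_combination -hs
    simp [h] at hinv
  have h2pow : (2 : ZMod p) ^ (p / 2) = 1 := (euler_criterion p h2ne).mp h2
  have h3pow := pow_div_two_eq_neg_one_of_not_isSquare h3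
  have h6w_pow : (2 * 3 * (4 + s)) ^ (p / 2) = 1 := by
    refine (euler_criterion p (mul_ne_zero (mul_ne_zero h2ne h3ne) hw0)).mp ⟨3 + s, ?_⟩
    linear_combination -hs
  rw [mul_pow, mul_pow, h2pow, h3pow] at h6w_pow
  linear_combination -h6w_pow

end ZMod

theorem fermat_pepin_necessity (n : ℕ) (hn : 1 < n)
    (hF : Nat.Prime (2 ^ 2 ^ n + 1)) :
    ((2 ^ 2 ^ n + 1 : ℕ) : ℤ) ∣ fermatSeq (2 ^ n - 2) := by
  change ((n.fermatNumber : ℕ) : ℤ) ∣ _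
  have : Fact n.fermatNumber.Prime := ⟨hF⟩
  have h8 : n.fermatNumber % 8 = 1 :=
    (Nat.fermatNumber_modEq_one_mod_sixteen hn).of_dvd (by norm_num)
  have h4 : n.fermatNumber % 4 = 1 := by omega
  have h15 := Nat.fermatNumber_modEq_two_mod_fifteen hn
  have h3 : ¬IsSquare (3 : ZMod n.fermatNumber) := by
    exact_mod_cast ZMod.not_isSquare_natCast_of_modEq_two (q := 3) h4 (by decide)
      (h15.of_dvd (by norm_num))
  have h5 : ¬IsSquare (5 : ZMod n.fermatNumber) := by
    have : Fact (Nat.Prime 5) := ⟨by norm_num⟩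
    exact_mod_cast ZMod.not_isSquare_natCast_of_modEq_two (q := 5) h4 (by decide)
      (h15.of_dvd (by norm_num))
  obtain ⟨s, hs, hw⟩ := ZMod.exists_sq_eq_fifteen_and_four_add_pow_div_two_eq_neg_one
    ((ZMod.exists_sq_eq_two_iff (by omega)).mpr (Or.inl h8)) h3 h5
  have hexp : 2 ^ n - 2 + 1 = 2 ^ n - 1 := by
    have : 2 ≤ 2 ^ n := Nat.le_self_pow (by omega) 2
    omega
  rw [← ZMod.intCast_zmod_eq_zero_iff_dvd]
  refine fermatSeq_cast_eq_zero_of_pow_eq_neg_one (w := 4 + s) (w' := 4 - s) (by ring)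
    (by linear_combination -hs) ?_
  rwa [hexp, ← Nat.fermatNumber_div_two]
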